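/- Let F be a saturated formation and U an F-normaliser of the soluble Lie algebra L. For any ideal A of L, (U + A)/A is an F-normaliser of L/A. -/

import Mathlib

/-!
For a class `𝔉` closed under epimorphic images, the image of an `𝔉`-normaliser under any
surjective homomorphism is an `𝔉`-normaliser; the quotient map `L → L ⧸ A` kills `A`.

Push the critical chain `L = C₀ > C₁ > ⋯ > Cₙ = U` forward along a surjection `g : C₀ → Q`,
inducting on its length. If `ker g ≤ C₁`, then `g(C₁)` is again `𝔉`-critical in `Q` (maximality,
the nilradical condition and `Q ⧸ core g(C₁) ≅ C₀ ⧸ core C₁` all pass through `g`) and the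
chain continues inside `g(C₁)`. Otherwise `C₁ + ker g = C₀` by maximality, so `g` already maps
`C₁` onto `Q` and the step is dropped.
-/

universe u
section Formation

variable (𝕜 : Type u) [Field 𝕜]

/-- A class of Lie algebras over `𝕜`. -/
def LieClass : Type (u + 1) := ∀ (M : Type u) [LieRing M] [LieAlgebra 𝕜 M], Prop

variable (L : Type u) [LieRing L] [LieAlgebra 𝕜 L]

/-- The quotient map `L → L ⧸ I` as a morphism of Lie algebras. -/
def lieQuotMk (I : LieIdeal 𝕜 L) : L →ₗ⁅𝕜⁆ L ⧸ I :=
  { (LieSubmodule.Quotient.mk' I).toLinearMap with map_lie' := fun {_ _} => rfl }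

/-- The core of a subalgebra: the largest ideal of `L` contained in it. -/
def lieCore (M : LieSubalgebra 𝕜 L) : LieIdeal 𝕜 L :=
  sSup {I : LieIdeal 𝕜 L | ∀ x ∈ I, x ∈ M}

/-- The nil radical: the largest nilpotent ideal (expressed as the supremum of all
nilpotent ideals, which coincides with the largest one in finite dimensions). -/
def lieNilradical : LieIdeal 𝕜 L :=
  sSup {I : LieIdeal 𝕜 L | LieRing.IsNilpotent I}

/-- The Frattini ideal: the largest ideal contained in every maximal subalgebra. -/
def lieFrattiniIdeal : LieIdeal 𝕜 L :=
  sSup {I : LieIdeal 𝕜 L | ∀ M : LieSubalgebra 𝕜 L, IsCoatom M → ∀ x ∈ I, x ∈ M}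

/-- A saturated formation of (finite-dimensional soluble) Lie algebras over `𝕜`:  a class of
soluble Lie algebras, closed under isomorphisms, quotients and subdirect sums (finite
subdirect products), such that `L ⧸ Φ(L) ∈ 𝔉` implies `L ∈ 𝔉`. -/
structure IsSaturatedFormation (𝔉 : LieClass 𝕜) : Prop where
  solvable : ∀ (M : Type u) [LieRing M] [LieAlgebra 𝕜 M], 𝔉 M → LieAlgebra.IsSolvable M
  finiteDimensional : ∀ (M : Type u) [LieRing M] [LieAlgebra 𝕜 M], 𝔉 M → FiniteDimensional 𝕜 M
  iso_closed : ∀ (M N : Type u) [LieRing M] [LieAlgebra 𝕜 M] [LieRing N] [LieAlgebra 𝕜 N],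
    (M ≃ₗ⁅𝕜⁆ N) → 𝔉 M → 𝔉 N
  quotient_closed : ∀ (M : Type u) [LieRing M] [LieAlgebra 𝕜 M] (I : LieIdeal 𝕜 M),
    𝔉 M → 𝔉 (M ⧸ I)
  subdirect_closed : ∀ (M : Type u) [LieRing M] [LieAlgebra 𝕜 M] (I J : LieIdeal 𝕜 M),
    I ⊓ J = ⊥ → 𝔉 (M ⧸ I) → 𝔉 (M ⧸ J) → 𝔉 M
  saturated : ∀ (M : Type u) [LieRing M] [LieAlgebra 𝕜 M] [FiniteDimensional 𝕜 M]
    [LieAlgebra.IsSolvable M], 𝔉 (M ⧸ lieFrattiniIdeal 𝕜 M) → 𝔉 M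

variable (𝔉 : LieClass 𝕜)

/-- A maximal subalgebra `M` of `L` is `𝔉`-normal if `L ⧸ core_L(M) ∈ 𝔉`. -/
def IsFNormalMaximal (M : LieSubalgebra 𝕜 L) : Prop :=
  IsCoatom M ∧ 𝔉 (L ⧸ lieCore 𝕜 L M)

/-- A maximal subalgebra `M` of `L` is `𝔉`-critical if it is `𝔉`-abnormal (that is,
`L ⧸ core_L(M) ∉ 𝔉`) and `M + N(L) = L` where `N(L)` is the nil radical. -/
def IsFCritical (M : LieSubalgebra 𝕜 L) : Prop :=
  IsCoatom M ∧ ¬ 𝔉 (L ⧸ lieCore 𝕜 L M) ∧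
    M ⊔ (lieNilradical 𝕜 L : LieSubalgebra 𝕜 L) = ⊤

/-- `V` is an `𝔉`-normaliser of `L` if `V ∈ 𝔉` and there is a chain
`L = M₀ > M₁ > ... > Mₙ = V` with each `Mᵢ` `𝔉`-critical in `Mᵢ₋₁`. -/
def IsFNormaliser (V : LieSubalgebra 𝕜 L) : Prop :=
  𝔉 V ∧ ∃ (n : ℕ) (C : Fin (n + 1) → LieSubalgebra 𝕜 L),
    C 0 = ⊤ ∧ C (Fin.last n) = V ∧
      ∀ i : Fin n, C i.succ ≤ C i.castSucc ∧
        IsFCritical 𝕜 (C i.castSucc) 𝔉 ((C i.succ).comap (C i.castSucc).incl)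

end Formation

namespace LieHom

variable {R : Type*} [CommRing R]
variable {P : Type*} [LieRing P] [LieAlgebra R P]
variable {Q : Type*} [LieRing Q] [LieAlgebra R Q]

def codRestrict (f : P →ₗ⁅R⁆ Q) (K : LieSubalgebra R Q) (h : ∀ x, f x ∈ K) :
    P →ₗ⁅R⁆ K :=
  { (f : P →ₗ[R] Q).codRestrict K.toSubmodule h with
    map_lie' := fun {_ _} => Subtype.ext (f.map_lie _ _) }

lemma incl_comp_codRestrict (f : P →ₗ⁅R⁆ Q) (K : LieSubalgebra R Q)
    (h : ∀ x, f x ∈ K) : K.incl.comp (f.codRestrict K h) = f :=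
  ext fun _ => rfl

lemma codRestrict_surjective (f : P →ₗ⁅R⁆ Q) {K : LieSubalgebra R Q}
    (hK : K ≤ f.range) (h : ∀ x, f x ∈ K) : Function.Surjective (f.codRestrict K h) :=
  fun ⟨_, hy⟩ => by
    obtain ⟨x, rfl⟩ := (mem_range f _).mp (hK hy)
    exact ⟨x, rfl⟩

noncomputable def quotKerEquivOfSurjective (f : P →ₗ⁅R⁆ Q)
    (hf : Function.Surjective f) : (P ⧸ f.ker) ≃ₗ⁅R⁆ Q :=
  f.quotKerEquivRange.trans
    ((LieEquiv.ofEq _ _ (by rw [(range_eq_top f).mpr hf])).trans LieSubalgebra.topEquiv)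

end LieHom

namespace LieSubalgebra

variable {R : Type*} [CommRing R]
variable {P : Type*} [LieRing P] [LieAlgebra R P]
variable {Q : Type*} [LieRing Q] [LieAlgebra R Q]
variable {T : Type*} [LieRing T] [LieAlgebra R T]

lemma map_map (f : P →ₗ⁅R⁆ Q) (g : Q →ₗ⁅R⁆ T) (K : LieSubalgebra R P) :
    (K.map f).map g = K.map (g.comp f) := by
  ext z
  simp only [mem_map, LieHom.coe_comp, Function.comp_apply]
  constructor
  · rintro ⟨_, ⟨x, hx, rfl⟩, rfl⟩
    exact ⟨x, hx, rfl⟩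
  · rintro ⟨x, hx, rfl⟩
    exact ⟨f x, ⟨x, hx, rfl⟩, rfl⟩

lemma map_top_of_surjective {f : P →ₗ⁅R⁆ Q} (hf : Function.Surjective f) :
    (⊤ : LieSubalgebra R P).map f = ⊤ := by
  rw [← LieHom.range_eq_map, (LieHom.range_eq_top f).mpr hf]

lemma comap_incl_self (K : LieSubalgebra R P) : K.comap K.incl = ⊤ :=
  eq_top_iff.mpr fun x _ => x.2

lemma map_comap_incl_comp_incl {U K : LieSubalgebra R P} (hUK : U ≤ K) (f : P →ₗ⁅R⁆ Q) :
    (U.comap K.incl).map (f.comp K.incl) = U.map f := by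
  ext y
  simp only [mem_map, mem_comap, LieHom.coe_comp, Function.comp_apply, coe_incl]
  constructor
  · rintro ⟨x, hx, rfl⟩
    exact ⟨x, hx, rfl⟩
  · rintro ⟨x, hx, rfl⟩
    exact ⟨⟨x, hUK hx⟩, hx, rfl⟩

lemma map_comap_incl_comp_inclusion {U M K : LieSubalgebra R P} (hUM : U ≤ M) (hMK : M ≤ K)
    (g : K →ₗ⁅R⁆ Q) : (U.comap M.incl).map (g.comp (inclusion hMK)) = (U.comap K.incl).map g := by
  ext y
  simp only [mem_map, mem_comap, LieHom.coe_comp, Function.comp_apply, coe_incl]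
  constructor
  · rintro ⟨x, hx, rfl⟩
    exact ⟨inclusion hMK x, hx, rfl⟩
  · rintro ⟨x, hx, rfl⟩
    exact ⟨⟨x, hUM hx⟩, hx, rfl⟩

lemma range_comp_inclusion {M K : LieSubalgebra R P} (hMK : M ≤ K) (g : K →ₗ⁅R⁆ Q) :
    (g.comp (inclusion hMK)).range = (M.comap K.incl).map g := by
  rw [LieHom.range_eq_map, ← comap_incl_self M, map_comap_incl_comp_inclusion le_rfl hMK]

lemma map_sup_of_le_ker (f : P →ₗ⁅R⁆ Q) {I : LieIdeal R P} (hI : I ≤ f.ker)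
    (K : LieSubalgebra R P) : (K ⊔ (I : LieSubalgebra R P)).map f = K.map f := by
  rw [(gc_map_comap (f := f)).l_sup, sup_eq_left, map_le_iff_le_comap]
  intro x hx
  rw [mem_comap, LieHom.mem_ker.mp (hI hx)]
  exact zero_mem _

lemma map_eq_top_of_not_ker_le {f : P →ₗ⁅R⁆ Q} (hf : Function.Surjective f)
    {M : LieSubalgebra R P} (hM : IsCoatom M) (h : ¬ (f.ker : LieSubalgebra R P) ≤ M) :
    M.map f = ⊤ := by
  rw [← map_sup_of_le_ker f le_rfl, codisjoint_iff.mp (hM.not_le_iff_codisjoint.mp h),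
    map_top_of_surjective hf]

lemma mem_map_iff_of_ker_le {f : P →ₗ⁅R⁆ Q} {M : LieSubalgebra R P}
    (hker : (f.ker : LieSubalgebra R P) ≤ M) {x : P} : f x ∈ M.map f ↔ x ∈ M := by
  refine ⟨fun hx => ?_, fun hx => ⟨x, hx, rfl⟩⟩
  obtain ⟨m, hm, hfm⟩ := (mem_map _ _ _).mp hx
  have hxm : x - m ∈ M := hker (LieHom.mem_ker.mpr (by rw [map_sub, hfm, sub_self]))
  simpa using M.add_mem hxm hm

lemma comap_map_of_ker_le {f : P →ₗ⁅R⁆ Q} {M : LieSubalgebra R P}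
    (hker : (f.ker : LieSubalgebra R P) ≤ M) : (M.map f).comap f = M :=
  LieSubalgebra.ext _ _ fun _ => mem_map_iff_of_ker_le hker

lemma map_comap_of_surjective {f : P →ₗ⁅R⁆ Q} (hf : Function.Surjective f)
    (X : LieSubalgebra R Q) : (X.comap f).map f = X := by
  refine le_antisymm ((gc_map_comap (f := f)).l_u_le X) fun y hy => ?_
  obtain ⟨x, rfl⟩ := hf y
  exact ⟨x, hy, rfl⟩

lemma isCoatom_map {f : P →ₗ⁅R⁆ Q} (hf : Function.Surjective f) {M : LieSubalgebra R P}
    (hker : (f.ker : LieSubalgebra R P) ≤ M) (hM : IsCoatom M) : IsCoatom (M.map f) := by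
  refine ⟨fun htop => hM.1 ?_, fun X hX => ?_⟩
  · rw [← comap_map_of_ker_le hker, htop]
    exact eq_top_iff.mpr fun _ _ => trivial
  · have hMX : M < X.comap f := by
      rw [← comap_map_of_ker_le hker]
      refine lt_of_le_of_ne ((gc_map_comap (f := f)).monotone_u hX.le) fun h => hX.ne ?_
      rw [← map_comap_of_surjective hf (M.map f), h, map_comap_of_surjective hf]
    rw [← map_comap_of_surjective hf X, hM.2 _ hMX, map_top_of_surjective hf]

end LieSubalgebra

namespace LieIdeal

variable {R : Type*} [CommRing R]
variable {P : Type*} [LieRing P] [LieAlgebra R P]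
variable {Q : Type*} [LieRing Q] [LieAlgebra R Q]

lemma isNilpotent_map_of_surjective {f : P →ₗ⁅R⁆ Q} (hf : Function.Surjective f)
    (I : LieIdeal R P) [LieRing.IsNilpotent I] : LieRing.IsNilpotent (I.map f) := by
  let g : I →ₗ⁅R⁆ I.map f :=
    { toFun := fun x => ⟨f x, mem_map x.2⟩
      map_add' := fun x y => Subtype.ext (map_add f (x : P) y)
      map_smul' := fun c x => Subtype.ext (map_smul f c (x : P))
      map_lie' := fun {x y} => Subtype.ext (f.map_lie x y) }
  refine Function.Surjective.lieAlgebra_isNilpotent (f := g) fun ⟨y, hy⟩ => ?_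
  obtain ⟨x, rfl⟩ := mem_map_of_surjective hf hy
  exact ⟨x, rfl⟩

end LieIdeal

section CoreAndNilradical

variable {𝕜 : Type u} [Field 𝕜]
variable {P : Type u} [LieRing P] [LieAlgebra 𝕜 P]
variable {Q : Type u} [LieRing Q] [LieAlgebra 𝕜 Q]

lemma le_lieCore_iff {M : LieSubalgebra 𝕜 P} {I : LieIdeal 𝕜 P} :
    I ≤ lieCore 𝕜 P M ↔ ∀ x ∈ I, x ∈ M := by
  refine ⟨fun h x hx => ?_, fun h => le_sSup h⟩
  have hcore : (lieCore 𝕜 P M).toSubmodule ≤ M.toSubmodule := by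
    rw [lieCore, LieSubmodule.sSup_toSubmodule]
    exact sSup_le fun _ ⟨J, hJ, hJp⟩ => hJp ▸ hJ
  exact hcore (h hx)

lemma mem_of_mem_lieCore {M : LieSubalgebra 𝕜 P} {x : P} (hx : x ∈ lieCore 𝕜 P M) : x ∈ M :=
  le_lieCore_iff.mp le_rfl x hx

lemma comap_lieCore_map {f : P →ₗ⁅𝕜⁆ Q} (hf : Function.Surjective f) {M : LieSubalgebra 𝕜 P}
    (hker : (f.ker : LieSubalgebra 𝕜 P) ≤ M) :
    (lieCore 𝕜 Q (M.map f)).comap f = lieCore 𝕜 P M := by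
  refine le_antisymm (le_lieCore_iff.mpr fun x hx => ?_) (LieIdeal.map_le_iff_le_comap.mp ?_)
  · exact (LieSubalgebra.mem_map_iff_of_ker_le hker).mp (mem_of_mem_lieCore hx)
  · refine le_lieCore_iff.mpr fun y hy => ?_
    obtain ⟨x, rfl⟩ := LieIdeal.mem_map_of_surjective hf hy
    exact ⟨x, mem_of_mem_lieCore x.2, rfl⟩

lemma map_lieNilradical_le {f : P →ₗ⁅𝕜⁆ Q} (hf : Function.Surjective f) :
    (lieNilradical 𝕜 P).map f ≤ lieNilradical 𝕜 Q := by
  rw [lieNilradical, (LieIdeal.gc_map_comap (f := f)).l_sSup]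
  exact iSup₂_le fun I (_ : LieRing.IsNilpotent I) =>
    le_sSup (LieIdeal.isNilpotent_map_of_surjective hf I)

end CoreAndNilradical

section Homomorph

variable {𝕜 : Type u} [Field 𝕜]
variable {P : Type u} [LieRing P] [LieAlgebra 𝕜 P]
variable {Q : Type u} [LieRing Q] [LieAlgebra 𝕜 Q]

def IsHomomorph (𝔉 : LieClass 𝕜) : Prop :=
  ∀ (P Q : Type u) [LieRing P] [LieAlgebra 𝕜 P] [LieRing Q] [LieAlgebra 𝕜 Q] (f : P →ₗ⁅𝕜⁆ Q),
    Function.Surjective f → 𝔉 P → 𝔉 Q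

variable {𝔉 : LieClass 𝕜}

lemma IsSaturatedFormation.isHomomorph (h𝔉 : IsSaturatedFormation 𝕜 𝔉) : IsHomomorph 𝔉 :=
  fun P _ _ _ _ _ f hf hP =>
    h𝔉.iso_closed _ _ (f.quotKerEquivOfSurjective hf) (h𝔉.quotient_closed P f.ker hP)

lemma IsHomomorph.quotient_comap (h𝔉 : IsHomomorph 𝔉) {f : P →ₗ⁅𝕜⁆ Q}
    (hf : Function.Surjective f) {J : LieIdeal 𝕜 Q} (hJ : 𝔉 (Q ⧸ J)) : 𝔉 (P ⧸ J.comap f) := by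
  have hsurj : Function.Surjective ((lieQuotMk 𝕜 Q J).comp f) :=
    (LieSubmodule.Quotient.surjective_mk' J).comp hf
  have hker : ((lieQuotMk 𝕜 Q J).comp f).ker = J.comap f := by
    ext x
    exact LieSubmodule.Quotient.mk_eq_zero'
  have e := ((lieQuotMk 𝕜 Q J).comp f).quotKerEquivOfSurjective hsurj
  rw [hker] at e
  exact h𝔉 _ _ e.symm.toLieHom e.symm.surjective hJ

lemma IsFCritical.map (h𝔉 : IsHomomorph 𝔉) {f : P →ₗ⁅𝕜⁆ Q} (hf : Function.Surjective f)
    {M : LieSubalgebra 𝕜 P} (hker : (f.ker : LieSubalgebra 𝕜 P) ≤ M)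
    (hM : IsFCritical 𝕜 P 𝔉 M) : IsFCritical 𝕜 Q 𝔉 (M.map f) := by
  obtain ⟨hcoatom, habnormal, hnil⟩ := hM
  refine ⟨LieSubalgebra.isCoatom_map hf hker hcoatom, fun hQ => habnormal ?_, ?_⟩
  · rw [← comap_lieCore_map hf hker]
    exact h𝔉.quotient_comap hf hQ
  · have hnil_map : (lieNilradical 𝕜 P : LieSubalgebra 𝕜 P).map f ≤ lieNilradical 𝕜 Q :=
      fun _ ⟨x, hx, hxy⟩ => hxy ▸ map_lieNilradical_le hf (LieIdeal.mem_map hx)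
    rw [eq_top_iff, ← LieSubalgebra.map_top_of_surjective hf, ← hnil,
      (LieSubalgebra.gc_map_comap (f := f)).l_sup]
    exact sup_le_sup_left hnil_map _

lemma IsFCritical.map_equiv (h𝔉 : IsHomomorph 𝔉) (e : P ≃ₗ⁅𝕜⁆ Q) {M : LieSubalgebra 𝕜 P}
    (hM : IsFCritical 𝕜 P 𝔉 M) : IsFCritical 𝕜 Q 𝔉 (M.map e.toLieHom) :=
  hM.map h𝔉 e.surjective fun x hx => by
    rw [LieIdeal.mem_toLieSubalgebra, LieHom.mem_ker] at hx
    rw [e.injective (hx.trans (map_zero e).symm)]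
    exact zero_mem M

lemma IsFCritical.map_of_injective (h𝔉 : IsHomomorph 𝔉) {f : P →ₗ⁅𝕜⁆ Q}
    (hf : Function.Injective f) {K K' : LieSubalgebra 𝕜 P} (hK : K' ≤ K)
    (h : IsFCritical 𝕜 K 𝔉 (K'.comap K.incl)) :
    IsFCritical 𝕜 (K.map f) 𝔉 ((K'.map f).comap (K.map f).incl) := by
  convert h.map_equiv h𝔉 (K.equivMapOfInjective f hf) using 1
  ext ⟨y, hy⟩
  simp only [LieSubalgebra.mem_comap, LieSubalgebra.mem_map, LieSubalgebra.coe_incl]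
  constructor
  · rintro ⟨x, hx, rfl⟩
    exact ⟨⟨x, hK hx⟩, hx, rfl⟩
  · rintro ⟨z, hz, hzy⟩
    exact ⟨z, hz, congrArg Subtype.val hzy⟩

end Homomorph

section Chains

variable {𝕜 : Type u} [Field 𝕜] {𝔉 : LieClass 𝕜}
variable {L : Type u} [LieRing L] [LieAlgebra 𝕜 L]
variable {Q : Type u} [LieRing Q] [LieAlgebra 𝕜 Q]

variable (𝔉) in
def IsFCriticalChain {n : ℕ} (C : Fin (n + 1) → LieSubalgebra 𝕜 L) : Prop :=
  ∀ i : Fin n, C i.succ ≤ C i.castSucc ∧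
    IsFCritical 𝕜 (C i.castSucc) 𝔉 ((C i.succ).comap (C i.castSucc).incl)

lemma IsFCriticalChain.last_le {n : ℕ} {C : Fin (n + 1) → LieSubalgebra 𝕜 L}
    (hC : IsFCriticalChain 𝔉 C) (j : Fin (n + 1)) : C (Fin.last n) ≤ C j := by
  induction j using Fin.reverseInduction with
  | last => exact le_rfl
  | cast i ih => exact ih.trans (hC i).1

lemma IsFCriticalChain.tail {n : ℕ} {C : Fin (n + 2) → LieSubalgebra 𝕜 L}
    (hC : IsFCriticalChain 𝔉 C) : IsFCriticalChain 𝔉 (Fin.tail C) :=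
  fun i => hC i.succ

lemma isFNormaliser_top (h𝔉 : IsHomomorph 𝔉) (hQ : 𝔉 Q) : IsFNormaliser 𝕜 Q 𝔉 ⊤ :=
  ⟨h𝔉 _ _ LieSubalgebra.topEquiv.symm.toLieHom LieSubalgebra.topEquiv.symm.surjective hQ,
    0, fun _ => ⊤, rfl, rfl, Fin.elim0⟩

lemma IsFNormaliser.map_incl_of_isFCritical (h𝔉 : IsHomomorph 𝔉) {D : LieSubalgebra 𝕜 Q}
    (hD : IsFCritical 𝕜 Q 𝔉 D) {W : LieSubalgebra 𝕜 D} (hW : IsFNormaliser 𝕜 D 𝔉 W) :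
    IsFNormaliser 𝕜 Q 𝔉 (W.map D.incl) := by
  obtain ⟨hFW, m, X, hX0, rfl, hX⟩ := hW
  replace hX : IsFCriticalChain 𝔉 X := hX
  have e := LieSubalgebra.equivMapOfInjective D.incl (X (Fin.last m)) Subtype.val_injective
  refine ⟨h𝔉 _ _ e.toLieHom e.surjective hFW, m + 1, Fin.cons ⊤ fun j => (X j).map D.incl,
    rfl, rfl, ?_⟩
  intro i
  cases i using Fin.cases with
  | zero =>
    refine ⟨le_top, ?_⟩
    change IsFCritical 𝕜 (⊤ : LieSubalgebra 𝕜 Q) 𝔉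
      (((X 0).map D.incl).comap (⊤ : LieSubalgebra 𝕜 Q).incl)
    rw [hX0, ← LieHom.range_eq_map, LieSubalgebra.incl_range]
    convert hD.map_equiv h𝔉 LieSubalgebra.topEquiv.symm using 1
    ext ⟨y, hy⟩
    simp only [LieSubalgebra.mem_comap, LieSubalgebra.mem_map, LieSubalgebra.coe_incl]
    exact ⟨fun hyD => ⟨y, hyD, rfl⟩, fun ⟨x, hx, hxy⟩ => by
      rwa [← show x = y from congrArg Subtype.val hxy]⟩
  | succ j =>
    simp only [← Fin.succ_castSucc, Fin.cons_succ]
    exact ⟨(LieSubalgebra.gc_map_comap (f := D.incl)).monotone_l (hX j).1,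
      (hX j).2.map_of_injective h𝔉 Subtype.val_injective (hX j).1⟩

lemma IsFCriticalChain.isFNormaliser_map (h𝔉 : IsHomomorph 𝔉) {n : ℕ}
    {C : Fin (n + 1) → LieSubalgebra 𝕜 L} (hC : IsFCriticalChain 𝔉 C) (hF : 𝔉 (C (Fin.last n)))
    (g : C 0 →ₗ⁅𝕜⁆ Q) (hg : Function.Surjective g) :
    IsFNormaliser 𝕜 Q 𝔉 (((C (Fin.last n)).comap (C 0).incl).map g) := by
  induction n generalizing Q with
  | zero =>
    change IsFNormaliser 𝕜 Q 𝔉 (((C 0).comap (C 0).incl).map g)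
    rw [LieSubalgebra.comap_incl_self, LieSubalgebra.map_top_of_surjective hg]
    exact isFNormaliser_top h𝔉 (h𝔉 _ _ g hg hF)
  | succ n ih =>
    obtain ⟨hMK, hcrit⟩ : C (Fin.succ 0) ≤ C 0 ∧
        IsFCritical 𝕜 (C 0) 𝔉 ((C (Fin.succ 0)).comap (C 0).incl) := hC 0
    have hUM : C (Fin.last (n + 1)) ≤ C (Fin.succ 0) := hC.tail.last_le 0
    have IH : ∀ {Q' : Type u} [LieRing Q'] [LieAlgebra 𝕜 Q'] (g' : C (Fin.succ 0) →ₗ⁅𝕜⁆ Q'),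
        Function.Surjective g' →
          IsFNormaliser 𝕜 Q' 𝔉 (((C (Fin.last (n + 1))).comap (C (Fin.succ 0)).incl).map g') :=
      fun g' hg' => ih hC.tail hF g' hg'
    let M₀ := (C (Fin.succ 0)).comap (C 0).incl
    let ι := LieSubalgebra.inclusion hMK
    by_cases hker : (g.ker : LieSubalgebra 𝕜 (C 0)) ≤ M₀
    · obtain ⟨h, hh, hincl⟩ : ∃ h : C (Fin.succ 0) →ₗ⁅𝕜⁆ M₀.map g,
          Function.Surjective h ∧ (M₀.map g).incl.comp h = g.comp ι :=
        ⟨_, LieHom.codRestrict_surjective _ (LieSubalgebra.range_comp_inclusion hMK g).ge _,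
          LieHom.incl_comp_codRestrict _ _ fun x =>
            (LieSubalgebra.mem_map _ _ _).mpr ⟨ι x, x.2, rfl⟩⟩
      have := (IH h hh).map_incl_of_isFCritical h𝔉 (hcrit.map h𝔉 hg hker)
      rwa [LieSubalgebra.map_map, hincl,
        LieSubalgebra.map_comap_incl_comp_inclusion hUM hMK] at this
    · have hsurj : Function.Surjective (g.comp ι) := by
        rw [← LieHom.range_eq_top, LieSubalgebra.range_comp_inclusion,
          LieSubalgebra.map_eq_top_of_not_ker_le hg hcrit.1 hker]
      rw [← LieSubalgebra.map_comap_incl_comp_inclusion hUM hMK]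
      exact IH _ hsurj

lemma IsFNormaliser.map (h𝔉 : IsHomomorph 𝔉) {U : LieSubalgebra 𝕜 L}
    (hU : IsFNormaliser 𝕜 L 𝔉 U) {f : L →ₗ⁅𝕜⁆ Q} (hf : Function.Surjective f) :
    IsFNormaliser 𝕜 Q 𝔉 (U.map f) := by
  obtain ⟨hFU, n, C, hC0, rfl, hC⟩ := hU
  replace hC : IsFCriticalChain 𝔉 C := hC
  have hsurj : Function.Surjective (f.comp (C 0).incl) := fun y => by
    obtain ⟨x, rfl⟩ := hf y
    exact ⟨⟨x, hC0 ▸ trivial⟩, rfl⟩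
  rw [← LieSubalgebra.map_comap_incl_comp_incl (hC.last_le 0) f]
  exact hC.isFNormaliser_map h𝔉 hFU _ hsurj

end Chains

theorem fnormaliser_quotient_general
    (𝕜 : Type u) [Field 𝕜] (𝔉 : LieClass 𝕜) (h𝔉 : IsSaturatedFormation 𝕜 𝔉)
    (L : Type u) [LieRing L] [LieAlgebra 𝕜 L]
    (U : LieSubalgebra 𝕜 L) (hU : IsFNormaliser 𝕜 L 𝔉 U)
    (A : LieIdeal 𝕜 L) :
    IsFNormaliser 𝕜 (L ⧸ A) 𝔉
      ((U ⊔ (A : LieSubalgebra 𝕜 L)).map (lieQuotMk 𝕜 L A)) := by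
  rw [LieSubalgebra.map_sup_of_le_ker (lieQuotMk 𝕜 L A)
    fun _ hx => LieHom.mem_ker.mpr (LieSubmodule.Quotient.mk_eq_zero'.mpr hx)]
  exact hU.map h𝔉.isHomomorph (LieSubmodule.Quotient.surjective_mk' A)

/-- If `U` is an `𝔉`-normaliser of the soluble Lie algebra `L` and `A` is an ideal of `L`,
then `(U + A)/A` is an `𝔉`-normaliser of `L ⧸ A`. -/
theorem fnormaliser_quotient
    (𝕜 : Type u) [Field 𝕜] (𝔉 : LieClass 𝕜) (h𝔉 : IsSaturatedFormation 𝕜 𝔉)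
    (L : Type u) [LieRing L] [LieAlgebra 𝕜 L] [FiniteDimensional 𝕜 L]
    [LieAlgebra.IsSolvable L] (U : LieSubalgebra 𝕜 L) (hU : IsFNormaliser 𝕜 L 𝔉 U)
    (A : LieIdeal 𝕜 L) :
    IsFNormaliser 𝕜 (L ⧸ A) 𝔉
      ((U ⊔ (A : LieSubalgebra 𝕜 L)).map (lieQuotMk 𝕜 L A)) :=
  fnormaliser_quotient_general 𝕜 𝔉 h𝔉 L U hU A
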